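/- arXiv:1803.06408 — 3 statements merged into one kernel-verified Lean document; each statement's English description precedes it below -/
import Mathlib

section
/- The compositional inverse (reversion) of x·(1 + rx)/(1 + (r+1)x) is x·N(x) where N(x) = (1/(1-(r+1)x))·c(-rx/(1-(r+1)x)^2) and c is the Catalan generating function; i.e., if u(x) is the unique formal power series with u(0) = 0 solving u(1+ru)/(1+(r+1)u) = x, then u(x) = (x/(1-(r+1)x))·c(-rx/(1-(r+1)x)^2). -/
open PowerSeries Finset

noncomputable section

/-- The field ℚ(r) of rational functions, in which the parameter r lives. -/
abbrev K : Type := RatFunc ℚ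

instance : CharZero K := RingHom.charZero_iff (algebraMap ℚ K).injective |>.mp inferInstance

/-- The parameter r. -/
def r : K := RatFunc.X

/-- Composition f(g) of formal power series (intended for g with zero constant term). -/
def pcomp (f g : K⟦X⟧) : K⟦X⟧ :=
  PowerSeries.mk fun n => ∑ k ∈ Finset.range (n + 1), coeff k f * coeff n (g ^ k)

/-- The generating function of the Catalan numbers. -/
def catalanGF : K⟦X⟧ := PowerSeries.mk fun n => (catalan n : K)

/-! Clearing the denominator, `u` is a root with zero constant term of the quadratic
`r u² + (1 - (r+1)x) u = x`, and such a root is unique because the difference of two roots is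
killed by a series with constant term `1`. Substituting `u = x c / (1 - (r+1)x)`, the quadratic
becomes the Catalan equation `c = 1 + y c²` with `y = -r x / (1 - (r+1)x)²`, which `c(y)`
satisfies because `pcomp` is substitution, a ring homomorphism. -/

theorem coeff_pow_eq_zero_of_lt {R : Type*} [CommSemiring R] {g : R⟦X⟧}
    (hg : constantCoeff g = 0) {n k : ℕ} (h : n < k) : coeff n (g ^ k) = 0 :=
  X_pow_dvd_iff.mp (pow_dvd_pow_of_dvd (X_dvd_iff.mpr hg) k) n h

theorem pcomp_eq_subst {f g : K⟦X⟧} (hg : constantCoeff g = 0) : pcomp f g = f.subst g := by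
  ext n
  rw [coeff_subst' (HasSubst.of_constantCoeff_zero' hg), pcomp, coeff_mk,
    finsum_eq_sum_of_support_subset _ (s := range (n + 1))]
  · rfl
  · intro k hk
    rw [Function.mem_support] at hk
    rw [coe_range, Set.mem_Iio]
    by_contra! hnk
    exact hk (by rw [coeff_pow_eq_zero_of_lt hg (by omega), smul_zero])

theorem catalanGF_eq_map : catalanGF = map (Nat.castRingHom K) catalanSeries := by
  ext n
  simp [catalanGF]

theorem pcomp_catalanGF_eq_one_add_mul_sq {y : K⟦X⟧} (hy : constantCoeff y = 0) :
    pcomp catalanGF y = 1 + y * pcomp catalanGF y ^ 2 := by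
  have hy' := HasSubst.of_constantCoeff_zero' hy
  have h := congrArg (substAlgHom hy' (R := K))
    (congrArg (map (Nat.castRingHom K)) catalanSeries_sq_mul_X_add_one)
  simp only [map_add, map_mul, map_pow, map_one, map_X, coe_substAlgHom, subst_X hy'] at h
  rw [pcomp_eq_subst hy, catalanGF_eq_map]
  linear_combination -h

theorem eq_of_quadratic_eq_of_constantCoeff_eq_zero {R : Type*} [CommRing R]
    {a A b u w : R⟦X⟧} (hA : IsUnit (constantCoeff A)) (hu : constantCoeff u = 0)
    (hw : constantCoeff w = 0) (hequ : a * u ^ 2 + A * u = b) (heqw : a * w ^ 2 + A * w = b) :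
    u = w := by
  have hunit : IsUnit (a * (u + w) + A) := by
    rw [isUnit_iff_constantCoeff]
    simpa [hu, hw] using hA
  have hfactor : (u - w) * (a * (u + w) + A) = 0 := by linear_combination hequ - heqw
  exact sub_eq_zero.mp (hunit.mul_left_eq_zero.mp hfactor)

theorem quadratic_eq_of_catalan_eq {k : Type*} [Field k] {a A c x : k⟦X⟧}
    (hA : constantCoeff A ≠ 0) (hc : c = 1 + -a * x * (A ^ 2)⁻¹ * c ^ 2) :
    a * (x * A⁻¹ * c) ^ 2 + A * (x * A⁻¹ * c) = x := by
  have hAinv : A * A⁻¹ = 1 := PowerSeries.mul_inv_cancel A hA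
  rw [sq A, PowerSeries.mul_inv_rev] at hc
  linear_combination x * hc + (x * c) * hAinv

/-- If u(0)=0 and u(1+ru)/(1+(r+1)u) = x, then
u(x) = (x/(1-(r+1)x))·c(-rx/(1-(r+1)x)²). -/
theorem reversion_is_signed_narayana (u : K⟦X⟧)
    (hu0 : constantCoeff u = 0)
    (heq : u * (1 + C r * u) * (1 + C (r + 1) * u)⁻¹ = X) :
    u = X * (1 - C (r + 1) * X)⁻¹ *
        pcomp catalanGF (-(C r) * X * ((1 - C (r + 1) * X) ^ 2)⁻¹) := by
  set A : K⟦X⟧ := 1 - C (r + 1) * X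
  have hA : constantCoeff A ≠ 0 := by simp [A]
  have hy : constantCoeff (-(C r) * X * (A ^ 2)⁻¹) = 0 := by simp
  have hden : constantCoeff (1 + C (r + 1) * u) ≠ 0 := by simp [hu0]
  have hu : C r * u ^ 2 + A * u = X := by
    linear_combination -(eq_mul_inv_iff_mul_eq hden).mp heq.symm
  refine eq_of_quadratic_eq_of_constantCoeff_eq_zero (isUnit_iff_ne_zero.mpr hA) hu0 ?_ hu
    (quadratic_eq_of_catalan_eq hA (pcomp_catalanGF_eq_one_add_mul_sq hy))
  simp

end
end

section
/- The formal power series e^t·(cosh(√(1+r)·t) - sinh(√(1+r)·t)/√(1+r)) has ordinary generating function (Borel-summed coefficients) (1-2x)/(1-2x-rx²); that is, if a_n(r) are defined by Σ a_n(r) x^n = (1-2x)/(1-2x-rx²), then Σ a_n(r) t^n/n! = e^t·(cosh(√(1+r) t) - sinh(√(1+r) t)/√(1+r)). -/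
/-!
Both sides solve the power-series ODE y'' = 2y' + r·y with y(0) = 1, y'(0) = 0, whose solution is
unique over a field of characteristic zero. For the left side, clearing the denominator
1 - 2x - rx² gives the recurrence a_{n+2} = 2a_{n+1} + r·a_n with a_0 = 1, a_1 = 0, and dividing
the n-th coefficient by n! turns the shift a_n ↦ a_{n+1} into differentiation. For the right side,
with s = 1 + r, the derivatives cosh' = s·(sinh/√s) and (sinh/√s)' = cosh give
(e^t(cosh - sinh/√s))' = (s - 1)·e^t·sinh/√s, and differentiating once more yields the ODE.
-/

open PowerSeries Finset

noncomputable section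

/-- cosh(√s·t) = Σ s^n t^{2n}/(2n)!, with s = 1+r; no square roots appear. -/
def coshSqrt (s : K) : K⟦X⟧ :=
  PowerSeries.mk fun n => if Even n then s ^ (n / 2) / (Nat.factorial n : K) else 0

/-- sinh(√s·t)/√s = Σ s^n t^{2n+1}/(2n+1)!, with s = 1+r; no square roots appear. -/
def sinhSqrtDiv (s : K) : K⟦X⟧ :=
  PowerSeries.mk fun n => if Even n then 0 else s ^ (n / 2) / (Nat.factorial n : K)

open scoped Nat

namespace PowerSeries

theorem eq_zero_of_derivative_derivative_eq {R : Type*} [CommRing R] [IsAddTorsionFree R]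
    {f : R⟦X⟧} (p q : R) (hf : d⁄dX R (d⁄dX R f) = C p * d⁄dX R f + C q * f)
    (h0 : coeff 0 f = 0) (h1 : coeff 1 f = 0) : f = 0 := by
  suffices h : ∀ n, coeff n f = 0 ∧ coeff (n + 1) f = 0 by ext n; exact (h n).1
  intro n
  induction n with
  | zero => exact ⟨h0, h1⟩
  | succ n ih =>
    refine ⟨ih.2, ?_⟩
    have hn := congrArg (coeff n) hf
    simp only [coeff_derivative, map_add, coeff_C_mul, ih.1, ih.2] at hn
    push_cast at hn
    have : ((n + 1) * (n + 2) : ℕ) • coeff (n + 2) f = 0 := by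
      rw [nsmul_eq_mul]; push_cast; linear_combination hn
    exact (smul_eq_zero_iff_right (by positivity)).mp this

theorem eq_of_derivative_derivative_eq {R : Type*} [CommRing R] [IsAddTorsionFree R]
    {f g : R⟦X⟧} (p q : R) (hf : d⁄dX R (d⁄dX R f) = C p * d⁄dX R f + C q * f)
    (hg : d⁄dX R (d⁄dX R g) = C p * d⁄dX R g + C q * g)
    (h0 : coeff 0 f = coeff 0 g) (h1 : coeff 1 f = coeff 1 g) : f = g := by
  refine sub_eq_zero.mp (eq_zero_of_derivative_derivative_eq p q ?_ ?_ ?_)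
  · simp only [map_sub, hf, hg]; ring
  · rw [map_sub, h0, sub_self]
  · rw [map_sub, h1, sub_self]

section Recurrence

variable {R : Type*} [CommRing R] {A P : R⟦X⟧} (p q : R)

theorem coeff_zero_of_mul_eq (h : (1 - C p * X - C q * X ^ 2) * A = P) :
    coeff 0 A = coeff 0 P := by
  simpa using congrArg (coeff 0) h

theorem coeff_one_of_mul_eq (h : (1 - C p * X - C q * X ^ 2) * A = P) :
    coeff 1 A = coeff 1 P + p * coeff 0 A := by
  have h1 := congrArg (coeff 1) h
  simp only [sub_mul, one_mul, mul_assoc, map_sub, coeff_C_mul, pow_two, coeff_succ_X_mul,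
    coeff_zero_X_mul] at h1
  linear_combination h1

theorem coeff_add_two_of_mul_eq (h : (1 - C p * X - C q * X ^ 2) * A = P) (n : ℕ) :
    coeff (n + 2) A = coeff (n + 2) P + p * coeff (n + 1) A + q * coeff n A := by
  have hn := congrArg (coeff (n + 2)) h
  simp only [sub_mul, one_mul, mul_assoc, map_sub, coeff_C_mul, pow_two, coeff_succ_X_mul] at hn
  linear_combination hn

end Recurrence

section Factorial

variable {k : Type*} [Field k] [CharZero k]

theorem derivative_mk_div_factorial (a : ℕ → k) :
    d⁄dX k (mk fun n => a n / n !) = mk fun n => a (n + 1) / n ! := by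
  ext n
  rw [coeff_derivative, coeff_mk, coeff_mk, Nat.factorial_succ, Nat.cast_mul]
  field_simp
  push_cast; ring

theorem derivative_derivative_mk_div_factorial {a : ℕ → k} (p q : k)
    (ha : ∀ n, a (n + 2) = p * a (n + 1) + q * a n) :
    d⁄dX k (d⁄dX k (mk fun n => a n / n !)) =
      C p * d⁄dX k (mk fun n => a n / n !) + C q * mk fun n => a n / n ! := by
  simp only [derivative_mk_div_factorial]
  ext n
  simp only [coeff_mk, map_add, coeff_C_mul, ha]
  ring

end Factorial

end PowerSeries

theorem coshSqrt_eq_mk_div_factorial (s : K) :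
    coshSqrt s = mk fun n => (if Even n then s ^ (n / 2) else 0) / n ! := by
  ext n; simp only [coshSqrt, coeff_mk, ite_div, zero_div]

theorem sinhSqrtDiv_eq_mk_div_factorial (s : K) :
    sinhSqrtDiv s = mk fun n => (if Even n then 0 else s ^ (n / 2)) / n ! := by
  ext n; simp only [sinhSqrtDiv, coeff_mk, ite_div, zero_div]

theorem derivative_coshSqrt (s : K) : d⁄dX K (coshSqrt s) = C s * sinhSqrtDiv s := by
  rw [coshSqrt_eq_mk_div_factorial, derivative_mk_div_factorial, sinhSqrtDiv_eq_mk_div_factorial]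
  ext n
  rw [coeff_mk, coeff_C_mul, coeff_mk, mul_div_assoc']
  congr 1
  rcases Nat.even_or_odd n with ⟨m, rfl⟩ | ⟨m, rfl⟩
  · simp [Nat.even_add_one]
  · simp [Nat.even_add_one, show (2 * m + 1 + 1) / 2 = m + 1 by omega,
      show (2 * m + 1) / 2 = m by omega, pow_succ']

theorem derivative_sinhSqrtDiv (s : K) : d⁄dX K (sinhSqrtDiv s) = coshSqrt s := by
  rw [sinhSqrtDiv_eq_mk_div_factorial, derivative_mk_div_factorial, coshSqrt_eq_mk_div_factorial]
  ext n
  rw [coeff_mk, coeff_mk]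
  congr 1
  rcases Nat.even_or_odd n with ⟨m, rfl⟩ | ⟨m, rfl⟩
  · simp [Nat.even_add_one, show (m + m + 1) / 2 = m by omega, show (m + m) / 2 = m by omega]
  · simp [Nat.even_add_one]

theorem derivative_exp_mul_coshSqrt_sub (s : K) :
    d⁄dX K (exp K * (coshSqrt s - sinhSqrtDiv s)) = C (s - 1) * (exp K * sinhSqrtDiv s) := by
  rw [Derivation.leibniz, smul_eq_mul, smul_eq_mul, map_sub, derivative_coshSqrt,
    derivative_sinhSqrtDiv, derivative_exp, map_sub, map_one]
  ring

theorem derivative_derivative_exp_mul_coshSqrt_sub (s : K) :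
    d⁄dX K (d⁄dX K (exp K * (coshSqrt s - sinhSqrtDiv s))) =
      C 2 * d⁄dX K (exp K * (coshSqrt s - sinhSqrtDiv s)) +
        C (s - 1) * (exp K * (coshSqrt s - sinhSqrtDiv s)) := by
  rw [derivative_exp_mul_coshSqrt_sub, Derivation.leibniz, Derivation.leibniz, smul_eq_mul,
    smul_eq_mul, smul_eq_mul, smul_eq_mul, derivative_sinhSqrtDiv, derivative_exp, derivative_C,
    map_ofNat]
  ring

theorem coeff_zero_exp_mul_coshSqrt_sub (s : K) :
    coeff 0 (exp K * (coshSqrt s - sinhSqrtDiv s)) = 1 := by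
  simp [coshSqrt, sinhSqrtDiv]

theorem coeff_one_exp_mul_coshSqrt_sub (s : K) :
    coeff 1 (exp K * (coshSqrt s - sinhSqrtDiv s)) = 0 := by
  have h := congrArg (coeff 0) (derivative_exp_mul_coshSqrt_sub s)
  rw [coeff_derivative] at h
  simpa [sinhSqrtDiv] using h

/-- If Σ a_n(r) x^n = (1-2x)/(1-2x-rx²), then
Σ a_n(r) t^n/n! = e^t·(cosh(√(1+r)·t) - sinh(√(1+r)·t)/√(1+r)). -/
theorem etude2_egf :
    (PowerSeries.mk fun n =>
        coeff n ((1 - 2 * X) * (1 - 2 * X - C r * X ^ 2)⁻¹) / (Nat.factorial n : K)) =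
      exp K * (coshSqrt (1 + r) - sinhSqrtDiv (1 + r)) := by
  set A := (1 - 2 * X) * (1 - 2 * X - C r * X ^ 2)⁻¹
  have hA : (1 - C 2 * X - C r * X ^ 2) * A = 1 - C 2 * X := by
    rw [map_ofNat, mul_left_comm, PowerSeries.mul_inv_cancel _ (by simp), mul_one]
  have hA0 : coeff 0 A = 1 := by simpa using coeff_zero_of_mul_eq 2 r hA
  have hA1 : coeff 1 A = 0 := by simpa [hA0, coeff_X] using coeff_one_of_mul_eq 2 r hA
  refine eq_of_derivative_derivative_eq 2 r ?_ ?_ ?_ ?_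
  · refine derivative_derivative_mk_div_factorial 2 r fun n => ?_
    simpa [coeff_X] using coeff_add_two_of_mul_eq 2 r hA n
  · simpa using derivative_derivative_exp_mul_coshSqrt_sub (1 + r)
  · simp [hA0, coeff_zero_exp_mul_coshSqrt_sub]
  · simp [hA1, coeff_one_exp_mul_coshSqrt_sub]

end
end

section
/- The coefficients a_n(r) of the expansion of (1-2x)/(1-2x-rx²) in ℚ[r][[x]] are given by a_n(r) = Σ_{k=0}^{⌊n/2⌋} C(n-k-1, n-2k)·2^{n-2k}·r^k. -/
open PowerSeries Finset

noncomputable section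

/-! The closed form satisfies `a (n + 2) = 2 a (n + 1) + r a n`, termwise by Pascal's rule, with
`a 0 = 1` and `a 1 = 0`. Multiplying its generating series by `1 - 2x - rx²` therefore leaves
exactly `1 - 2x`. -/

theorem PowerSeries.mk_mul_eq_of_linear_recurrence {R : Type*} [CommRing R] (p q : R)
    (a : ℕ → R) (ha : ∀ n, a (n + 2) = p * a (n + 1) + q * a n) :
    mk a * (1 - C p * X - C q * X ^ 2) = C (a 0) + C (a 1 - p * a 0) * X := by
  rw [show mk a * (1 - C p * X - C q * X ^ 2) = mk a - C p * (X * mk a) - C q * (X ^ 2 * mk a) by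
    ring]
  ext (_ | _ | n) <;> simp [coeff_X_pow_mul', ha]

section ClosedForm

variable {R : Type*} [CommRing R] (t : R)

/-- The summand is cut off by hand past `k = n / 2`: there truncated subtraction would make the
raw expression `choose (n - k - 1) 0 * 2 ^ 0 * t ^ k = t ^ k`. -/
def closedFormTerm (n k : ℕ) : R :=
  if 2 * k ≤ n then ((n - k - 1).choose (n - 2 * k) : R) * 2 ^ (n - 2 * k) * t ^ k else 0

def closedForm (n : ℕ) : R :=
  ∑ k ∈ range (n / 2 + 1), ((n - k - 1).choose (n - 2 * k) : R) * 2 ^ (n - 2 * k) * t ^ k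

theorem closedForm_eq_sum_range {n N : ℕ} (hN : n / 2 < N) :
    closedForm t n = ∑ k ∈ range N, closedFormTerm t n k := by
  have : (range N).filter (fun k => 2 * k ≤ n) = range (n / 2 + 1) := by
    ext k; simp only [mem_filter, mem_range]; omega
  rw [closedForm, ← this, sum_filter]
  rfl

theorem closedFormTerm_succ_zero (n : ℕ) : closedFormTerm t (n + 1) 0 = 0 := by
  simp [closedFormTerm]

theorem closedFormTerm_add_two_succ (n k : ℕ) :
    closedFormTerm t (n + 2) (k + 1) =
      2 * closedFormTerm t (n + 1) (k + 1) + t * closedFormTerm t n k := by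
  unfold closedFormTerm
  rcases lt_trichotomy (2 * k) n with h | rfl | h
  · obtain ⟨i, rfl⟩ := Nat.exists_eq_add_of_lt h
    rw [if_pos (by omega), if_pos (by omega), if_pos (by omega),
      show 2 * k + i + 1 + 2 - (k + 1) - 1 = (k + i) + 1 by omega,
      show 2 * k + i + 1 + 2 - 2 * (k + 1) = i + 1 by omega,
      show 2 * k + i + 1 + 1 - (k + 1) - 1 = k + i by omega,
      show 2 * k + i + 1 + 1 - 2 * (k + 1) = i by omega,
      show 2 * k + i + 1 - k - 1 = k + i by omega,
      show 2 * k + i + 1 - 2 * k = i + 1 by omega, Nat.choose_succ_succ]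
    push_cast
    ring
  · rw [if_pos (by omega), if_neg (by omega), if_pos le_rfl]
    simp only [show 2 * k + 2 - 2 * (k + 1) = 0 by omega, tsub_self, Nat.choose_zero_right,
      Nat.cast_one, pow_zero, mul_zero, zero_add]
    ring
  · rw [if_neg (by omega), if_neg (by omega), if_neg (by omega)]
    ring

theorem closedForm_add_two (n : ℕ) :
    closedForm t (n + 2) = 2 * closedForm t (n + 1) + t * closedForm t n := by
  rw [closedForm_eq_sum_range t (N := n + 3) (by omega),
    closedForm_eq_sum_range t (N := n + 3) (by omega),
    closedForm_eq_sum_range t (N := n + 2) (by omega),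
    sum_range_succ', sum_range_succ' _ (n + 2), closedFormTerm_succ_zero,
    closedFormTerm_succ_zero]
  simp only [closedFormTerm_add_two_succ, sum_add_distrib, mul_sum, add_zero]

theorem closedForm_zero : closedForm t 0 = 1 := by simp [closedForm]

theorem closedForm_one : closedForm t 1 = 0 := by simp [closedForm]

end ClosedForm

/-- a_n(r) = Σ_{k=0}^{⌊n/2⌋} C(n-k-1, n-2k)·2^{n-2k}·r^k, where a_n(r) are the
coefficients of (1-2x)/(1-2x-rx²). (Nat subtraction realizes the convention
C(-1,0) = 1 for the n = 0 term.) -/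
theorem etude2_coefficients (n : ℕ) :
    coeff (R := K) n ((1 - 2 * X) * (1 - 2 * X - C (R := K) r * X ^ 2)⁻¹) =
      ∑ k ∈ range (n / 2 + 1),
        (Nat.choose (n - k - 1) (n - 2 * k) : K) * 2 ^ (n - 2 * k) * r ^ k := by
  have hden : constantCoeff (1 - 2 * X - C (R := K) r * X ^ 2) ≠ 0 := by simp
  have hmk : mk (closedForm r) = (1 - 2 * X) * (1 - 2 * X - C r * X ^ 2)⁻¹ := by
    rw [eq_mul_inv_iff_mul_eq hden, ← map_ofNat C 2,
      mk_mul_eq_of_linear_recurrence _ _ _ (closedForm_add_two r)]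
    simp [closedForm_zero, closedForm_one, sub_eq_add_neg]
  rw [← hmk, coeff_mk, closedForm]

end
end
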